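/- arXiv:1902.01677 — 9 statements merged into one kernel-verified Lean document; each statement's English description precedes it below -/
import Mathlib

section
/- Let f be an absolute normalized norm on ℝ^N. If x, y ∈ ℝ^N satisfy |x_i| ≤ |y_i| for every i ≤ N, then f(x) ≤ f(y). -/
/-! Shrinking one coordinate in absolute value moves a point onto the segment between two of its
sign flips. Both flips have the same value under an absolute function, so convexity bounds the
value at the new point by the value at the old one; induction over the coordinates does the rest. -/

/-- `f` is a norm on `ℝ^N`. -/
def IsNormOn {N : ℕ} (f : (Fin N → ℝ) → ℝ) : Prop :=
  (∀ x, f x = 0 ↔ x = 0) ∧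
  (∀ (a : ℝ) (x), f (a • x) = |a| * f x) ∧
  (∀ x y, f (x + y) ≤ f x + f y)

/-- `f` is absolute: it only depends on the absolute values of the coordinates. -/
def IsAbsoluteNorm {N : ℕ} (f : (Fin N → ℝ) → ℝ) : Prop :=
  ∀ x, f x = f (fun i => |x i|)

/-- `f` is normalized: it takes the value `1` at each canonical basis vector. -/
def IsNormalizedNorm {N : ℕ} (f : (Fin N → ℝ) → ℝ) : Prop :=
  ∀ i, f (Pi.single i 1) = 1

open Function Set

lemma convexOn_univ_of_add_le_of_smul_eq {E : Type*} [AddCommGroup E] [Module ℝ E] {f : E → ℝ}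
    (hadd : ∀ x y, f (x + y) ≤ f x + f y) (hsmul : ∀ (a : ℝ) x, f (a • x) = |a| * f x) :
    ConvexOn ℝ univ f :=
  (Seminorm.of (𝕜 := ℝ) f hadd hsmul).convexOn

section Absolute

variable {ι : Type*} {f : (ι → ℝ) → ℝ}

lemma apply_update_le_of_abs_le [DecidableEq ι] (hf : ConvexOn ℝ univ f)
    (habs : ∀ x, f x = f fun i => |x i|) (y : ι → ℝ) (i : ι) {t : ℝ} (ht : |t| ≤ |y i|) :
    f (update y i t) ≤ f y := by
  have hflip : ∀ s : ℝ, |s| = |y i| → f (update y i s) = f y := fun s hs => by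
    rw [habs, habs y]
    congr 1
    ext j
    rcases eq_or_ne j i with rfl | hj
    · simp [hs]
    · simp [hj]
  have hseg : update y i t ∈ segment ℝ (update y i (-|y i|)) (update y i |y i|) := by
    rw [← Pi.image_update_segment, segment_eq_Icc (by simp)]
    exact mem_image_of_mem _ (abs_le.mp ht)
  calc f (update y i t) ≤ max (f (update y i (-|y i|))) (f (update y i |y i|)) :=
        hf.le_on_segment (mem_univ _) (mem_univ _) hseg
    _ = f y := by rw [hflip _ (by simp), hflip _ (by simp), max_self]

lemma apply_le_apply_of_abs_le [Fintype ι] (hf : ConvexOn ℝ univ f)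
    (habs : ∀ x, f x = f fun i => |x i|) {x y : ι → ℝ} (hxy : ∀ i, |x i| ≤ |y i|) :
    f x ≤ f y := by
  classical
  suffices h : ∀ s : Finset ι, f (s.piecewise x y) ≤ f y by
    simpa using h Finset.univ
  intro s
  induction s using Finset.induction_on with
  | empty => simp
  | insert j s hj ih =>
    rw [Finset.piecewise_insert]
    refine (apply_update_le_of_abs_le hf habs _ j ?_).trans ih
    rw [Finset.piecewise_eq_of_notMem _ _ _ hj]
    exact hxy j

end Absolute

theorem stmt0_general {N : ℕ} (f : (Fin N → ℝ) → ℝ)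
    (hnorm : IsNormOn f) (habs : IsAbsoluteNorm f)
    (x y : Fin N → ℝ) (hxy : ∀ i, |x i| ≤ |y i|) :
    f x ≤ f y :=
  apply_le_apply_of_abs_le
    (convexOn_univ_of_add_le_of_smul_eq hnorm.2.2 hnorm.2.1) habs hxy

/-- If `f` is an absolute normalized norm on `ℝ^N` and `|x i| ≤ |y i|` for every `i`,
then `f x ≤ f y`. -/
theorem stmt0 {N : ℕ} (f : (Fin N → ℝ) → ℝ)
    (hnorm : IsNormOn f) (habs : IsAbsoluteNorm f) (hnormalized : IsNormalizedNorm f)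
    (x y : Fin N → ℝ) (hxy : ∀ i, |x i| ≤ |y i|) :
    f x ≤ f y :=
  stmt0_general f hnorm habs x y hxy
end

section
/- Let f be an absolute normalized norm on ℝ^N. If x, y ∈ ℝ^N satisfy |x_i| < |y_i| for every i ≤ N, then f(x) < f(y). -/
lemma norm_nonneg_aux {N : ℕ} (f : (Fin N → ℝ) → ℝ) (hnorm : IsNormOn f) (z : Fin N → ℝ) :
    0 ≤ f z := by
  obtain ⟨h0, hsmul, htri⟩ := hnorm
  have hz0 : f 0 = 0 := (h0 0).mpr rfl
  have hneg : f (-z) = f z := by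
    have := hsmul (-1) z
    simpa using this
  have := htri z (-z)
  rw [add_neg_cancel, hz0, hneg] at this
  linarith

lemma update_le_aux {N : ℕ} (f : (Fin N → ℝ) → ℝ) (hnorm : IsNormOn f)
    (habs : IsAbsoluteNorm f) (z : Fin N → ℝ) (i : Fin N) (t : ℝ) (ht0 : 0 ≤ t) (ht1 : t ≤ 1) :
    f (Function.update z i (t * z i)) ≤ f z := by
  obtain ⟨h0, hsmul, htri⟩ := hnorm
  have key : Function.update z i (t * z i)
      = ((1 + t) / 2) • z + ((1 - t) / 2) • Function.update z i (-(z i)) := by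
    funext j
    by_cases hj : j = i
    · subst hj
      simp [Function.update_self]
      ring
    · simp [Function.update_of_ne hj]
      ring
  have habs' : f (Function.update z i (-(z i))) = f z := by
    rw [habs (Function.update z i (-(z i))), habs z]
    congr 1
    funext j
    by_cases hj : j = i
    · subst hj; simp
    · simp [Function.update_of_ne hj]
  calc f (Function.update z i (t * z i))
      ≤ f (((1 + t) / 2) • z) + f (((1 - t) / 2) • Function.update z i (-(z i))) := by
        rw [key]; exact htri _ _
    _ = ((1 + t) / 2) * f z + ((1 - t) / 2) * f z := by
        rw [hsmul, hsmul, habs', abs_of_nonneg (by linarith), abs_of_nonneg (by linarith)]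
    _ = f z := by ring

lemma mono_aux {N : ℕ} (f : (Fin N → ℝ) → ℝ) (hnorm : IsNormOn f)
    (habs : IsAbsoluteNorm f) (x y : Fin N → ℝ) (h : ∀ i, |x i| ≤ |y i|) :
    f x ≤ f y := by
  have key : ∀ s : Finset (Fin N),
      f (fun j => if j ∈ s then |x j| else |y j|) ≤ f (fun j => |y j|) := by
    intro s
    induction s using Finset.induction with
    | empty => simp
    | @insert i s hi ih =>
      set t : ℝ := if y i = 0 then 0 else |x i| / |y i| with ht
      have hyi : 0 ≤ |y i| := abs_nonneg _
      have ht0 : 0 ≤ t := by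
        rw [ht]; split
        · exact le_rfl
        · positivity
      have ht1 : t ≤ 1 := by
        rw [ht]; split
        · norm_num
        · rename_i hy
          rw [div_le_one (abs_pos.mpr hy)]
          exact h i
      have hxi : |x i| = t * |y i| := by
        rw [ht]; split
        · rename_i hy
          have hx : |x i| ≤ 0 := by simpa [hy] using h i
          have hx0 : |x i| = 0 := le_antisymm hx (abs_nonneg _)
          simp [hx0, hy]
        · rename_i hy
          field_simp
      have heq : (fun j => if j ∈ insert i s then |x j| else |y j|)
          = Function.update (fun j => if j ∈ s then |x j| else |y j|) i
            (t * (fun j => if j ∈ s then |x j| else |y j|) i) := by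
        funext j
        by_cases hj : j = i
        · subst hj
          simp [Function.update_self, hi, hxi]
        · simp [Function.update_of_ne hj, hj]
      rw [heq]
      exact le_trans (update_le_aux f hnorm habs _ i t ht0 ht1) ih
  have := key Finset.univ
  simp only [Finset.mem_univ, if_true] at this
  calc f x = f (fun j => |x j|) := habs x
    _ ≤ f (fun j => |y j|) := this
    _ = f y := (habs y).symm

/-- If `f` is an absolute normalized norm on `ℝ^N` (`N ≥ 1`) and `|x i| < |y i|` for every
`i`, then `f x < f y`. -/
theorem stmt2 {N : ℕ} (hN : 0 < N) (f : (Fin N → ℝ) → ℝ)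
    (hnorm : IsNormOn f) (habs : IsAbsoluteNorm f) (hnormalized : IsNormalizedNorm f)
    (x y : Fin N → ℝ) (hxy : ∀ i, |x i| < |y i|) :
    f x < f y := by
  have hNe : (Finset.univ : Finset (Fin N)).Nonempty := by
    simpa [Finset.univ_nonempty_iff] using Fin.pos_iff_nonempty.mp hN
  have hy0 : ∀ i, 0 < |y i| := fun i => lt_of_le_of_lt (abs_nonneg _) (hxy i)
  set t : ℝ := Finset.univ.sup' hNe (fun i => |x i| / |y i|) with ht
  have ht1 : t < 1 := by
    rw [ht]
    apply Finset.sup'_lt_iff hNe |>.mpr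
    intro i _
    rw [div_lt_one (hy0 i)]
    exact hxy i
  have ht0 : 0 ≤ t := by
    obtain ⟨i, hi⟩ := hNe
    refine le_trans ?_ (Finset.le_sup' (fun i => |x i| / |y i|) hi)
    positivity
  have hle : ∀ i, |x i| ≤ |(t • fun j => |y j|) i| := by
    intro i
    have h1 : |x i| / |y i| ≤ t := by rw [ht]; exact Finset.le_sup' (fun i => |x i| / |y i|) (Finset.mem_univ i)
    have h2 : |x i| ≤ t * |y i| := by
      rw [div_le_iff₀ (hy0 i)] at h1
      linarith
    calc |x i| ≤ t * |y i| := h2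
      _ ≤ |(t • fun j => |y j|) i| := by
          simp [abs_mul, abs_of_nonneg ht0, abs_abs, le_refl]
  have hfy : 0 < f y := by
    have hyne : y ≠ 0 := by
      obtain ⟨i, _⟩ := hNe
      intro h
      have := hy0 i
      rw [h] at this
      simp at this
    have := norm_nonneg_aux f hnorm y
    rcases lt_or_eq_of_le this with h | h
    · exact h
    · exact absurd ((hnorm.1 y).mp h.symm) hyne
  calc f x ≤ f (t • fun j => |y j|) := mono_aux f hnorm habs _ _ hle
    _ = t * f y := by rw [hnorm.2.1, abs_of_nonneg ht0, ← habs y]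
    _ < 1 * f y := by exact mul_lt_mul_of_pos_right ht1 hfy
    _ = f y := one_mul _
end

section
/- Let f be an absolute normalized norm on ℝ^N and define f*(y) = max{ Σ_{i=1}^N y_i x_i : x ∈ ℝ^N, f(x) ≤ 1 } for y ∈ ℝ^N. Then f* is also an absolute normalized norm on ℝ^N, and the map sending y ∈ ℝ^N to the linear functional x ↦ Σ_{i=1}^N y_i x_i is a surjective linear isometry from (ℝ^N, f*) onto the dual space of (ℝ^N, f). -/
/-- Let `f` be an absolute normalized norm on `ℝ^N` and let `fStar` be its dual norm,
i.e. for every `y`, `fStar y` is the maximum (least upper bound, attained) of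
`{∑ i, y i * x i : f x ≤ 1}`.  Then `fStar` is an absolute normalized norm on `ℝ^N`,
and `y ↦ (x ↦ ∑ i, y i * x i)` is a surjective linear isometry from `(ℝ^N, fStar)`
onto the dual of `(ℝ^N, f)`: the dual norm `sup {|∑ i, y i * x i| : f x ≤ 1}` of the
functional associated to `y` equals `fStar y`, and every linear functional on `ℝ^N`
is of this form. -/
theorem stmt3 {N : ℕ} (f : (Fin N → ℝ) → ℝ)
    (hnorm : IsNormOn f) (habs : IsAbsoluteNorm f) (hnormalized : IsNormalizedNorm f)
    (fStar : (Fin N → ℝ) → ℝ)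
    (hfStar : ∀ y, IsGreatest {s : ℝ | ∃ x, f x ≤ 1 ∧ s = ∑ i, y i * x i} (fStar y)) :
    (IsNormOn fStar ∧ IsAbsoluteNorm fStar ∧ IsNormalizedNorm fStar) ∧
    (∀ y, IsLUB {s : ℝ | ∃ x, f x ≤ 1 ∧ s = |∑ i, y i * x i|} (fStar y)) ∧
    (∀ φ : (Fin N → ℝ) →ₗ[ℝ] ℝ, ∃ y : Fin N → ℝ, ∀ x, φ x = ∑ i, y i * x i) := by
  obtain ⟨hzero, hsmul, htri⟩ := hnorm
  have hf0 : f 0 = 0 := (hzero 0).mpr rfl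
  have hfneg : ∀ x, f (-x) = f x := by
    intro x
    have := hsmul (-1) x
    simpa using this
  -- every coordinate is bounded by the norm
  have hcoord : ∀ (x : Fin N → ℝ) i, |x i| ≤ f x := by
    intro x i
    set x' : Fin N → ℝ := fun j => if j = i then -x j else x j with hx'
    have hfx' : f x' = f x := by
      rw [habs x', habs x]
      congr 1
      funext j
      by_cases h : j = i <;> simp [hx', h]
    have hdiff : x - x' = (2 * x i) • (Pi.single i 1 : Fin N → ℝ) := by
      funext j
      by_cases h : j = i
      · subst h; simp [hx']; ring
      · simp [hx', h, Pi.single_apply]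
    have h1 : f (x - x') ≤ f x + f x := by
      have := htri x (-x')
      rw [hfneg, hfx'] at this
      simpa [sub_eq_add_neg] using this
    have h2 : f (x - x') = 2 * |x i| := by
      rw [hdiff, hsmul, hnormalized i, abs_mul]
      simp [abs_of_nonneg (by norm_num : (0:ℝ) ≤ 2)]
    linarith
  have hub : ∀ y x, f x ≤ 1 → ∑ i, y i * x i ≤ fStar y :=
    fun y x hx => (hfStar y).2 ⟨x, hx, rfl⟩
  have hmem : ∀ y, ∃ x, f x ≤ 1 ∧ fStar y = ∑ i, y i * x i := fun y => (hfStar y).1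
  have hnonneg : ∀ y, 0 ≤ fStar y := by
    intro y
    have := hub y 0 (by simp [hf0])
    simpa using this
  have hfStar0 : fStar 0 = 0 := by
    obtain ⟨x, hx, he⟩ := hmem 0
    simpa using he
  -- |y i| ≤ fStar y
  have hsingle : ∀ (y : Fin N → ℝ) i, |y i| ≤ fStar y := by
    intro y i
    set c : ℝ := if 0 ≤ y i then 1 else -1 with hc
    have hxc : f (Pi.single i c) ≤ 1 := by
      have : (Pi.single i c : Fin N → ℝ) = c • (Pi.single i 1 : Fin N → ℝ) := by
        funext j
        by_cases h : j = i <;> simp [Pi.single_apply, h]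
      rw [this, hsmul, hnormalized i]
      have hc1 : |c| = 1 := by rw [hc]; split_ifs <;> norm_num
      rw [hc1, mul_one]
    have hsum : ∑ j, y j * (Pi.single i c : Fin N → ℝ) j = |y i| := by
      rw [Finset.sum_eq_single i]
      · simp [hc]
        split_ifs with h
        · simp [abs_of_nonneg h]
        · simp [abs_of_neg (lt_of_not_ge h)]
      · intro b _ hb; simp [Pi.single_apply, hb]
      · intro h; exact absurd (Finset.mem_univ i) h
    have := hub y (Pi.single i c) hxc
    rw [hsum] at this
    exact this
  -- sign trick: flipping signs of coordinates preserves f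
  have hsign : ∀ (y x : Fin N → ℝ), f (fun i => if 0 ≤ y i then x i else -x i) = f x := by
    intro y x
    rw [habs, habs x]
    congr 1
    funext i
    split_ifs <;> simp
  -- homogeneity, ≤ direction
  have hsmul_le : ∀ (a : ℝ) (y : Fin N → ℝ), fStar (a • y) ≤ |a| * fStar y := by
    intro a y
    obtain ⟨x, hx, he⟩ := hmem (a • y)
    set c : ℝ := if 0 ≤ a then 1 else -1 with hc
    have hcx : f (c • x) ≤ 1 := by
      have hc1 : |c| = 1 := by rw [hc]; split_ifs <;> norm_num
      rw [hsmul, hc1, one_mul]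
      exact hx
    have key : fStar (a • y) = |a| * ∑ i, y i * (c • x) i := by
      rw [he, Finset.mul_sum]
      refine Finset.sum_congr rfl fun i _ => ?_
      simp only [Pi.smul_apply, smul_eq_mul, hc]
      split_ifs with h
      · rw [abs_of_nonneg h]; ring
      · rw [abs_of_neg (lt_of_not_ge h)]; ring
    rw [key]
    exact mul_le_mul_of_nonneg_left (hub y _ hcx) (abs_nonneg a)
  have hsmul' : ∀ (a : ℝ) (y : Fin N → ℝ), fStar (a • y) = |a| * fStar y := by
    intro a y
    rcases eq_or_ne a 0 with rfl | ha
    · simp [hfStar0]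
    · refine le_antisymm (hsmul_le a y) ?_
      have h1 : fStar y = fStar (a⁻¹ • (a • y)) := by
        rw [smul_smul, inv_mul_cancel₀ ha, one_smul]
      calc |a| * fStar y = |a| * fStar (a⁻¹ • (a • y)) := by rw [h1]
        _ ≤ |a| * (|a⁻¹| * fStar (a • y)) :=
            mul_le_mul_of_nonneg_left (hsmul_le a⁻¹ (a • y)) (abs_nonneg a)
        _ = fStar (a • y) := by
            rw [← mul_assoc, abs_inv, mul_inv_cancel₀ (abs_ne_zero.mpr ha), one_mul]
  have hdef : ∀ y : Fin N → ℝ, fStar y = 0 ↔ y = 0 := by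
    intro y
    constructor
    · intro h
      funext i
      have := hsingle y i
      rw [h] at this
      have : |y i| = 0 := le_antisymm this (abs_nonneg _)
      simpa using this
    · rintro rfl; exact hfStar0
  have htri' : ∀ y z : Fin N → ℝ, fStar (y + z) ≤ fStar y + fStar z := by
    intro y z
    obtain ⟨x, hx, he⟩ := hmem (y + z)
    have : fStar (y + z) = (∑ i, y i * x i) + ∑ i, z i * x i := by
      rw [he, ← Finset.sum_add_distrib]
      exact Finset.sum_congr rfl fun i _ => by simp [add_mul]
    rw [this]
    exact add_le_add (hub y x hx) (hub z x hx)
  have habs' : IsAbsoluteNorm fStar := by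
    intro y
    refine le_antisymm ?_ ?_
    · obtain ⟨x, hx, he⟩ := hmem y
      set x' : Fin N → ℝ := fun i => if 0 ≤ y i then x i else -x i with hx'
      have hfx' : f x' ≤ 1 := by rw [hx', hsign y x]; exact hx
      have : fStar y = ∑ i, |y i| * x' i := by
        rw [he]
        refine Finset.sum_congr rfl fun i _ => ?_
        simp only [hx']
        split_ifs with h
        · rw [abs_of_nonneg h]
        · rw [abs_of_neg (lt_of_not_ge h)]; ring
      rw [this]
      exact hub (fun i => |y i|) x' hfx'
    · obtain ⟨x, hx, he⟩ := hmem (fun i => |y i|)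
      set x' : Fin N → ℝ := fun i => if 0 ≤ y i then x i else -x i with hx'
      have hfx' : f x' ≤ 1 := by rw [hx', hsign y x]; exact hx
      have : fStar (fun i => |y i|) = ∑ i, y i * x' i := by
        rw [he]
        refine Finset.sum_congr rfl fun i _ => ?_
        simp only [hx']
        split_ifs with h
        · rw [abs_of_nonneg h]
        · rw [abs_of_neg (lt_of_not_ge h)]; ring
      rw [this]
      exact hub y x' hfx'
  have hnormalized' : IsNormalizedNorm fStar := by
    intro i
    refine le_antisymm ?_ ?_
    · obtain ⟨x, hx, he⟩ := hmem (Pi.single i 1)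
      have : fStar (Pi.single i (1:ℝ)) = x i := by
        rw [he, Finset.sum_eq_single i]
        · simp
        · intro b _ hb; simp [Pi.single_apply, hb]
        · intro h; exact absurd (Finset.mem_univ i) h
      rw [this]
      exact le_trans (le_abs_self _) (le_trans (hcoord x i) hx)
    · have := hub (Pi.single i 1 : Fin N → ℝ) (Pi.single i 1 : Fin N → ℝ)
        (le_of_eq (hnormalized i))
      have hsum : ∑ j, (Pi.single i 1 : Fin N → ℝ) j * (Pi.single i 1 : Fin N → ℝ) j = 1 := by
        rw [Finset.sum_eq_single i]
        · simp
        · intro b _ hb; simp [Pi.single_apply, hb]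
        · intro h; exact absurd (Finset.mem_univ i) h
      rw [hsum] at this
      exact this
  refine ⟨⟨⟨hdef, hsmul', htri'⟩, habs', hnormalized'⟩, ?_, ?_⟩
  · -- IsLUB part
    intro y
    refine IsGreatest.isLUB ⟨?_, ?_⟩
    · obtain ⟨x, hx, he⟩ := hmem y
      refine ⟨x, hx, ?_⟩
      have h0 : 0 ≤ ∑ i, y i * x i := he ▸ hnonneg y
      rw [abs_of_nonneg h0]
      exact he
    · rintro s ⟨x, hx, rfl⟩
      rw [abs_le]
      constructor
      · have hnx : f (-x) ≤ 1 := by rw [hfneg]; exact hx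
        have := hub y (-x) hnx
        have heq : ∑ i, y i * (-x) i = -∑ i, y i * x i := by
          rw [← Finset.sum_neg_distrib]
          exact Finset.sum_congr rfl fun i _ => by simp
        rw [heq] at this
        linarith
      · exact hub y x hx
  · -- surjectivity part
    intro φ
    refine ⟨fun i => φ (Pi.single i 1), fun x => ?_⟩
    rw [LinearMap.pi_apply_eq_sum_univ φ x]
    refine Finset.sum_congr rfl fun i _ => ?_
    have : (fun j => if i = j then (1:ℝ) else 0) = Pi.single i 1 := by
      funext j
      simp [Pi.single_apply, eq_comm]
    rw [this, smul_eq_mul, mul_comm]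
end

section
/- Let |(x,y,z)| = max{ √(x² + y²), |x| + |z| } for (x,y,z) ∈ ℝ³. There do not exist absolute norms f and g on ℝ² such that |(x,y,z)| = f(g(y,z), x) for all (x,y,z) ∈ ℝ³. -/
/-- The norm `|(x,y,z)| = max { √(x² + y²), |x| + |z| }` on `ℝ³`. -/
noncomputable def trinorm (v : Fin 3 → ℝ) : ℝ :=
  max (Real.sqrt ((v 0) ^ 2 + (v 1) ^ 2)) (|v 0| + |v 2|)


/-- There do not exist absolute norms `f` and `g` on `ℝ²` such that
`|(x,y,z)| = f(g(y,z), x)` for all `(x,y,z) ∈ ℝ³`, where `|·|` is the norm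
`|(x,y,z)| = max { √(x² + y²), |x| + |z| }`. -/
theorem stmt7 :
    ¬ ∃ f g : (Fin 2 → ℝ) → ℝ,
      IsNormOn f ∧ IsAbsoluteNorm f ∧ IsNormOn g ∧ IsAbsoluteNorm g ∧
      ∀ x y z : ℝ, trinorm ![x, y, z] = f ![g ![y, z], x] := by
  rintro ⟨f, g, ⟨-, hfh, -⟩, hfa, -, -, h⟩
  -- homogeneity along first coordinate
  have hhom : ∀ s : ℝ, f ![s, 0] = |s| * f ![1, 0] := by
    intro s
    have : (s • ![1, 0] : Fin 2 → ℝ) = ![s, 0] := by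
      funext i; fin_cases i <;> simp
    rw [← this, hfh]
  set c := f ![1, 0] with hc
  -- trinorm values at x = 0
  have h10 : trinorm ![0, 1, 0] = 1 := by
    simp [trinorm, Matrix.cons_val_zero, Matrix.cons_val_one]
  have h01 : trinorm ![0, 0, 1] = 1 := by
    simp [trinorm]
  have e1 : |g ![1, 0]| * c = 1 := by
    have := h 0 1 0
    rw [h10, hhom] at this
    linarith
  have e2 : |g ![0, 1]| * c = 1 := by
    have := h 0 0 1
    rw [h01, hhom] at this
    linarith
  have hcne : c ≠ 0 := by
    intro h0; rw [h0, mul_zero] at e1; norm_num at e1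
  have habs : |g ![1, 0]| = |g ![0, 1]| := mul_right_cancel₀ hcne (e1.trans e2.symm)
  -- by absoluteness of f, f ![a, 1] depends only on |a|
  have hfabs : ∀ a : ℝ, f ![a, 1] = f ![|a|, 1] := by
    intro a
    have := hfa ![a, 1]
    convert this using 2
    funext i; fin_cases i <;> simp
  have key : trinorm ![1, 1, 0] = trinorm ![1, 0, 1] := by
    rw [h 1 1 0, h 1 0 1, hfabs (g ![1, 0]), hfabs (g ![0, 1]), habs]
  have t1 : trinorm ![1, 1, 0] = Real.sqrt 2 := by
    simp [trinorm]; norm_num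
  have t2 : trinorm ![1, 0, 1] = 2 := by
    simp [trinorm]; norm_num
  rw [t1, t2] at key
  nlinarith [Real.sq_sqrt (by norm_num : (2:ℝ) ≥ 0), Real.sqrt_nonneg 2]
end

section
/- Let |(x,y,z)| = max{ √(x² + y²), |x| + |z| } for (x,y,z) ∈ ℝ³. There do not exist absolute norms f and g on ℝ² such that |(x,y,z)| = f(g(x,z), y) for all (x,y,z) ∈ ℝ³. -/
/-!
Put `a = g(1,0)` and `b = g(0,1)`. Evaluating at `(1,0,0)` and `(0,0,1)` gives
`f(a,0) = f(b,0) = 1`, so `|a| = |b|` by homogeneity of `f`. As `f` is absolute,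
`f(a,1) = f(b,1)`; but these are the values `√2` and `1` of the norm at `(1,1,0)` and `(0,1,1)`.
-/

namespace IsNormOn

variable {N : ℕ} {f : (Fin N → ℝ) → ℝ}

theorem abs_eq_of_apply_smul_eq (hf : IsNormOn f) {x : Fin N → ℝ} (hx : x ≠ 0) {a b : ℝ}
    (h : f (a • x) = f (b • x)) : |a| = |b| := by
  have hfx : f x ≠ 0 := fun h0 => hx ((hf.1 x).mp h0)
  rw [hf.2.1, hf.2.1] at h
  exact mul_right_cancel₀ hfx h

end IsNormOn

theorem IsAbsoluteNorm.apply_eq_of_abs_eq {N : ℕ} {f : (Fin N → ℝ) → ℝ} (hf : IsAbsoluteNorm f)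
    {x y : Fin N → ℝ} (h : ∀ i, |x i| = |y i|) : f x = f y := by
  rw [hf x, hf y]
  simp only [h]

theorem trinorm_e₁ : trinorm ![1, 0, 0] = 1 := by
  simp [trinorm]

theorem trinorm_e₃ : trinorm ![0, 0, 1] = 1 := by
  simp [trinorm]

theorem trinorm_e₁_add_e₂ : trinorm ![1, 1, 0] = Real.sqrt 2 := by
  norm_num [trinorm, Matrix.cons_val_two, Real.one_lt_sqrt_two.le]

theorem trinorm_e₂_add_e₃ : trinorm ![0, 1, 1] = 1 := by
  simp [trinorm]

/-- There do not exist absolute norms `f` and `g` on `ℝ²` such that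
`|(x,y,z)| = f(g(x,z), y)` for all `(x,y,z) ∈ ℝ³`, where `|·|` is the norm
`|(x,y,z)| = max { √(x² + y²), |x| + |z| }`. -/
theorem stmt8 :
    ¬ ∃ f g : (Fin 2 → ℝ) → ℝ,
      IsNormOn f ∧ IsAbsoluteNorm f ∧ IsNormOn g ∧ IsAbsoluteNorm g ∧
      ∀ x y z : ℝ, trinorm ![x, y, z] = f ![g ![x, z], y] := by
  rintro ⟨f, g, hf, hf_abs, -, -, h⟩
  have smul_e₁ (t : ℝ) : (![t, 0] : Fin 2 → ℝ) = t • ![1, 0] := by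
    ext i; fin_cases i <;> simp
  have hg : |g ![1, 0]| = |g ![0, 1]| := by
    refine hf.abs_eq_of_apply_smul_eq (x := ![1, 0]) (by simp) ?_
    rw [← smul_e₁, ← smul_e₁, ← h, ← h, trinorm_e₁, trinorm_e₃]
  have hf_eq : f ![g ![1, 0], 1] = f ![g ![0, 1], 1] :=
    hf_abs.apply_eq_of_abs_eq (Fin.forall_fin_two.mpr ⟨hg, rfl⟩)
  rw [← h, ← h, trinorm_e₁_add_e₂, trinorm_e₂_add_e₃] at hf_eq
  exact Real.one_lt_sqrt_two.ne' hf_eq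
end

section
/- Let |(x,y,z)| = max{ √(x² + y²), |x| + |z| } for (x,y,z) ∈ ℝ³. There do not exist absolute norms f and g on ℝ² such that |(x,y,z)| = f(g(x,y), z) for all (x,y,z) ∈ ℝ³. -/
lemma isNormOn_nonneg {N : ℕ} {g : (Fin N → ℝ) → ℝ} (hg : IsNormOn g) (x : Fin N → ℝ) :
    0 ≤ g x := by
  obtain ⟨h0, hs, ha⟩ := hg
  have h1 : g (x + (-1 : ℝ) • x) = 0 := by
    rw [neg_one_smul, add_neg_cancel, (h0 0).2 rfl]
  have h2 := ha x ((-1 : ℝ) • x)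
  rw [h1, hs] at h2
  simp at h2
  linarith

/-- There do not exist absolute norms `f` and `g` on `ℝ²` such that
`|(x,y,z)| = f(g(x,y), z)` for all `(x,y,z) ∈ ℝ³`, where `|·|` is the norm
`|(x,y,z)| = max { √(x² + y²), |x| + |z| }`. -/
theorem stmt9 :
    ¬ ∃ f g : (Fin 2 → ℝ) → ℝ,
      IsNormOn f ∧ IsAbsoluteNorm f ∧ IsNormOn g ∧ IsAbsoluteNorm g ∧
      ∀ x y z : ℝ, trinorm ![x, y, z] = f ![g ![x, y], z] := by
  rintro ⟨f, g, hf, hfabs, hg, hgabs, h⟩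
  set c := g ![1, 0] with hc
  set d := g ![0, 1] with hd
  have hcn : 0 ≤ c := isNormOn_nonneg hg _
  have hdn : 0 ≤ d := isNormOn_nonneg hg _
  have h1 : f ![c, 0] = 1 := by
    have := h 1 0 0
    simp [trinorm, Matrix.cons_val_zero, Matrix.cons_val_one] at this
    linarith [this]
  have h2 : f ![d, 0] = 1 := by
    have := h 0 1 0
    simp [trinorm] at this
    linarith [this]
  have h3 : f ![c, 1] = 2 := by
    have := h 1 0 1
    simp [trinorm] at this
    linarith [this]
  have h4 : f ![d, 1] = 1 := by
    have := h 0 1 1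
    simp [trinorm] at this
    linarith [this]
  -- homogeneity: f ![c,0] = c * f ![1,0]
  have key : ∀ t : ℝ, 0 ≤ t → f ![t, 0] = t * f ![1, 0] := by
    intro t ht
    have : (![t, 0] : Fin 2 → ℝ) = t • ![1, 0] := by
      ext i; fin_cases i <;> simp
    rw [this, hf.2.1, abs_of_nonneg ht]
  have hcF := key c hcn
  have hdF := key d hdn
  rw [h1] at hcF
  rw [h2] at hdF
  have hF : f ![1, 0] ≠ 0 := by
    intro h0; rw [h0, mul_zero] at hcF; exact one_ne_zero hcF
  have hcd : c = d := by
    have := hcF.symm.trans hdF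
    exact mul_right_cancel₀ hF this
  rw [hcd, h4] at h3
  norm_num at h3
end

section
/- Let |·| be a norm on ℝ^N. For every ε > 0 there exists δ > 0 such that for every a* in the unit sphere of (ℝ^N)* there exists b* in the unit sphere of (ℝ^N)* satisfying: (1) dist(a, F(b*)) < ε for every a in the unit sphere of ℝ^N with a*(a) > 1 − δ, where F(b*) = { y in the unit sphere of ℝ^N : b*(y) = 1 }; and (2) b*(e_i) = 0 for every i ≤ N such that a*(e_i) = 0, where e_i are the canonical basis vectors of ℝ^N. -/
/-- The dual norm, with respect to the norm `f` on `ℝ^N`, of a linear functional `φ`: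
the supremum of `|φ x|` over the `f`-unit ball. -/
noncomputable def dualNormF {N : ℕ} (f : (Fin N → ℝ) → ℝ)
    (φ : (Fin N → ℝ) →ₗ[ℝ] ℝ) : ℝ :=
  sSup {s : ℝ | ∃ x, f x ≤ 1 ∧ s = |φ x|}

/-! Fix `ε > 0`. For one functional `A` of norm one, compactness of the unit sphere shows that the
slices `{x : ‖x‖ = 1, A x > 1 - δ}` fall into the `ε`-neighbourhood of the face `{y : ‖y‖ = 1, A y = 1}`
for small `δ`. A functional `a` close to `A` has its `δ/2`-slice inside the `δ`-slice of `A`, and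
every basis vector killed by `a` is killed by `A`; so `b = A` serves for all `a` near `A`.
Compactness of the dual unit sphere makes `δ` uniform. -/

open Filter Topology

section SliceNearFace

variable {E : Type*} [NormedAddCommGroup E] [NormedSpace ℝ E]

/-- The slice `{x ∈ S_E : a x > 1 - δ}` of the unit sphere lies in the open `ε`-neighbourhood of
the face `F(b) = {y ∈ S_E : b y = 1}`. -/
def SliceNearFace (δ ε : ℝ) (a b : StrongDual ℝ E) : Prop :=
  ∀ x : E, ‖x‖ = 1 → 1 - δ < a x → ∃ y, ‖y‖ = 1 ∧ b y = 1 ∧ ‖x - y‖ < ε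

theorem SliceNearFace.of_norm_sub_le {δ δ' ε : ℝ} {a A b : StrongDual ℝ E}
    (h : SliceNearFace δ ε A b) (hδ : δ' + ‖a - A‖ ≤ δ) : SliceNearFace δ' ε a b := by
  intro x hx hax
  refine h x hx ?_
  have : (a - A) x ≤ ‖a - A‖ := calc
    (a - A) x ≤ ‖a - A‖ * ‖x‖ := (le_abs_self _).trans ((a - A).le_opNorm x)
    _ = ‖a - A‖ := by rw [hx, mul_one]
  rw [sub_apply] at this
  linarith

theorem exists_sliceNearFace_self [FiniteDimensional ℝ E] {A : StrongDual ℝ E} (hA : ‖A‖ ≤ 1)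
    {ε : ℝ} (hε : 0 < ε) : ∃ δ > 0, SliceNearFace δ ε A A := by
  set K := Metric.sphere (0 : E) 1 ∩ {x | ∀ y, ‖y‖ = 1 → A y = 1 → ε ≤ ‖x - y‖}
  have hK : IsCompact K := by
    refine (isCompact_sphere 0 1).inter_right ?_
    simp only [Set.ofPred_forall]
    exact isClosed_iInter fun y => isClosed_iInter fun _ => isClosed_iInter fun _ =>
      isClosed_le continuous_const (continuous_id.sub continuous_const).norm
  -- On `K` we have `A < 1`: a point of the sphere with `A x = 1` lies on the face itself.
  have hlt : ∀ x ∈ K, 0 < 1 - A x := by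
    rintro x ⟨hx, hfar⟩
    rw [mem_sphere_zero_iff_norm] at hx
    have hle : A x ≤ 1 := calc
      A x ≤ ‖A‖ * ‖x‖ := (le_abs_self _).trans (A.le_opNorm x)
      _ ≤ 1 := by rwa [hx, mul_one]
    rcases hle.lt_or_eq with hlt | heq
    · linarith
    · have := hfar x hx heq
      rw [sub_self, norm_zero] at this
      linarith
  obtain ⟨δ, hδ, hδK⟩ := hK.exists_forall_le' (f := fun x => 1 - A x) (by fun_prop) hlt
  refine ⟨δ, hδ, fun x hx hAx => ?_⟩
  by_contra! hfar
  linarith [hδK x ⟨mem_sphere_zero_iff_norm.2 hx, hfar⟩]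

end SliceNearFace

section Compactness

variable {E : Type*} [NormedAddCommGroup E] [NormedSpace ℝ E] {ι : Type*}

theorem eventually_apply_eq_zero_imp [Finite ι] (A : StrongDual ℝ E) (e : ι → E) :
    ∀ᶠ a in 𝓝 A, ∀ i, a (e i) = 0 → A (e i) = 0 := by
  refine eventually_all.2 fun i => ?_
  by_cases hA : A (e i) = 0
  · exact Eventually.of_forall fun _ _ => hA
  · exact ((ContinuousLinearMap.apply ℝ ℝ (e i)).continuous.continuousAt.eventually_ne hA).mono
      fun a ha h0 => absurd h0 ha

theorem eventually_exists_sliceNearFace [FiniteDimensional ℝ E] [Finite ι] (e : ι → E)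
    {A : StrongDual ℝ E} (hA : ‖A‖ = 1) {ε : ℝ} (hε : 0 < ε) :
    ∀ᶠ p in 𝓝[>] (0 : ℝ) ×ˢ 𝓝 A, ∃ b : StrongDual ℝ E, ‖b‖ = 1 ∧
      SliceNearFace p.1 ε p.2 b ∧ ∀ i, p.2 (e i) = 0 → b (e i) = 0 := by
  obtain ⟨δ, hδ, hA_slice⟩ := exists_sliceNearFace_self hA.le hε
  have hsmall : ∀ᶠ t in 𝓝[>] (0 : ℝ), t < δ / 2 :=
    nhdsWithin_le_nhds (gt_mem_nhds (half_pos hδ))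
  have hnear : ∀ᶠ a in 𝓝 A, ‖a - A‖ < δ / 2 :=
    Metric.eventually_nhds_iff.2 ⟨δ / 2, half_pos hδ, fun _ h => by rwa [dist_eq_norm] at h⟩
  filter_upwards [hsmall.prod_mk (hnear.and (eventually_apply_eq_zero_imp A e))]
  rintro ⟨t, a⟩ ⟨ht, ha, hzero⟩
  exact ⟨A, hA, hA_slice.of_norm_sub_le (by linarith), hzero⟩

theorem exists_pos_forall_exists_sliceNearFace [FiniteDimensional ℝ E] [Finite ι] (e : ι → E)
    {ε : ℝ} (hε : 0 < ε) :
    ∃ δ > 0, ∀ a : StrongDual ℝ E, ‖a‖ = 1 → ∃ b : StrongDual ℝ E, ‖b‖ = 1 ∧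
      SliceNearFace δ ε a b ∧ ∀ i, a (e i) = 0 → b (e i) = 0 := by
  have hunif := (isCompact_sphere (0 : StrongDual ℝ E) 1).mem_prod_nhdsSet_of_forall
    fun A hA => eventually_exists_sliceNearFace e (mem_sphere_zero_iff_norm.1 hA) hε
  obtain ⟨δ, hδ_all, hδ⟩ :=
    ((Eventually.curry hunif).mono fun _ h => h.self_of_nhdsSet).and self_mem_nhdsWithin |>.exists
  exact ⟨δ, hδ, fun a ha => hδ_all a (mem_sphere_zero_iff_norm.2 ha)⟩

end Compactness

theorem StrongDual.sSup_abs_apply_closedBall_eq_norm {E : Type*} [NormedAddCommGroup E]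
    [NormedSpace ℝ E] (g : StrongDual ℝ E) :
    sSup {s : ℝ | ∃ x : E, ‖x‖ ≤ 1 ∧ s = |g x|} = ‖g‖ := by
  rw [← g.sSup_unitClosedBall_eq_norm]
  congr 1
  ext s
  simp [eq_comm]

theorem IsNormOn.nonneg {N : ℕ} {f : (Fin N → ℝ) → ℝ} (hf : IsNormOn f) (x : Fin N → ℝ) :
    0 ≤ f x := by
  have hneg : f (-x) = f x := by simpa using hf.2.1 (-1) x
  have h0 : f 0 = 0 := (hf.1 0).2 rfl
  have := hf.2.2 x (-x)
  rw [add_neg_cancel, h0, hneg] at this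
  linarith

/-- A copy of `ℝ^N` on which `f` will be the norm (`Fin N → ℝ` already carries the sup norm). -/
def NormedBy {N : ℕ} (_f : (Fin N → ℝ) → ℝ) : Type := Fin N → ℝ

namespace NormedBy

variable {N : ℕ} {f : (Fin N → ℝ) → ℝ}

instance : AddCommGroup (NormedBy f) := inferInstanceAs (AddCommGroup (Fin N → ℝ))

instance : Module ℝ (NormedBy f) := inferInstanceAs (Module ℝ (Fin N → ℝ))

instance : FiniteDimensional ℝ (NormedBy f) := inferInstanceAs (FiniteDimensional ℝ (Fin N → ℝ))

instance : Norm (NormedBy f) := ⟨f⟩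

theorem normedSpaceCore (hf : IsNormOn f) : NormedSpace.Core ℝ (NormedBy f) where
  norm_nonneg := hf.nonneg
  norm_smul c x := hf.2.1 c x
  norm_triangle := hf.2.2
  norm_eq_zero_iff := hf.1

end NormedBy

/-- Let `f` be a norm on `ℝ^N`.  For every `ε > 0` there is `δ > 0` such that for every
functional `a` in the unit sphere of the dual of `(ℝ^N, f)` there exists a functional `b`
in the dual unit sphere such that: (1) every `a` in the `f`-unit sphere with
`a* a > 1 - δ` is at `f`-distance less than `ε` from the set
`F(b) = {y : f y = 1 ∧ b y = 1}`; and (2) `b (e i) = 0` whenever `a (e i) = 0`. -/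
theorem stmt11 {N : ℕ} (f : (Fin N → ℝ) → ℝ) (hnorm : IsNormOn f)
    (ε : ℝ) (hε : 0 < ε) :
    ∃ δ : ℝ, 0 < δ ∧
      ∀ a : (Fin N → ℝ) →ₗ[ℝ] ℝ, dualNormF f a = 1 →
        ∃ b : (Fin N → ℝ) →ₗ[ℝ] ℝ, dualNormF f b = 1 ∧
          (∀ x, f x = 1 → 1 - δ < a x → ∃ y, f y = 1 ∧ b y = 1 ∧ f (x - y) < ε) ∧
          (∀ i, a (Pi.single i 1) = 0 → b (Pi.single i 1) = 0) := by
  let := NormedAddCommGroup.ofCore (NormedBy.normedSpaceCore hnorm)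
  let := NormedSpace.ofCore (NormedBy.normedSpaceCore hnorm)
  let toDual : ((Fin N → ℝ) →ₗ[ℝ] ℝ) → StrongDual ℝ (NormedBy f) := fun a =>
    LinearMap.toContinuousLinearMap (a : NormedBy f →ₗ[ℝ] ℝ)
  have hdual (a) : dualNormF f a = ‖toDual a‖ :=
    StrongDual.sSup_abs_apply_closedBall_eq_norm (toDual a)
  obtain ⟨δ, hδ, H⟩ :=
    exists_pos_forall_exists_sliceNearFace (E := NormedBy f) (fun i => Pi.single i 1) hε
  refine ⟨δ, hδ, fun a ha => ?_⟩
  obtain ⟨b, hb, hslice, hzero⟩ := H (toDual a) (hdual a ▸ ha)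
  exact ⟨b.toLinearMap, hdual _ ▸ hb, hslice, hzero⟩
end

section
/- Let E be the space ℓ¹ of absolutely summable real sequences endowed with the norm ‖x‖ = ‖x‖₁ + ‖(x_n / 2ⁿ)‖₂. Then E is uniformly monotone; more precisely, for every ε > 0, if x, y ∈ E with x, y ≥ 0 coordinatewise, ‖x‖ = 1 and ‖x + y‖ ≤ 1 + ε/2, then ‖y‖ ≤ ε. -/
/-- The norm `‖x‖ = ‖x‖₁ + ‖(x n / 2ⁿ)‖₂` on the space `ℓ¹` of absolutely summable real
sequences. -/
noncomputable def Enorm (x : lp (fun _ : ℕ => ℝ) 1) : ℝ :=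
  ‖x‖ + Real.sqrt (∑' n, (x n / 2 ^ n) ^ 2)

lemma Enorm_norm1 (x : lp (fun _ : ℕ => ℝ) 1) : ‖x‖ = ∑' n, ‖x n‖ := by
  have := lp.norm_eq_tsum_rpow (p := 1) (by norm_num) x
  simpa using this

lemma Enorm_summable (x : lp (fun _ : ℕ => ℝ) 1) : Summable (fun n => ‖x n‖) := by
  have := (lp.memℓp x).summable (p := 1) (by norm_num)
  simpa using this

lemma Enorm_sq_summable (x : lp (fun _ : ℕ => ℝ) 1) (hx : ∀ n, 0 ≤ x n) :
    Summable (fun n => (x n / 2 ^ n) ^ 2) := by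
  have hs : Summable (fun n : ℕ => ‖x‖ * ‖x n‖) := (Enorm_summable x).mul_left _
  refine hs.of_nonneg_of_le (fun n => sq_nonneg _) (fun n => ?_)
  have h1 : x n / 2 ^ n ≤ x n := div_le_self (hx n) (one_le_pow₀ one_le_two)
  have h2 : x n ≤ ‖x‖ := (le_abs_self _).trans
    (by simpa using lp.norm_apply_le_norm (p := 1) one_ne_zero x n)
  have h0 : 0 ≤ x n / 2 ^ n := div_nonneg (hx n) (by positivity)
  have := hx n
  calc (x n / 2 ^ n) ^ 2 ≤ (x n) ^ 2 := by nlinarith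
    _ ≤ ‖x‖ * ‖x n‖ := by rw [Real.norm_eq_abs, abs_of_nonneg this]; nlinarith

/-- The space `E = (ℓ¹, ‖·‖₁ + ‖(x n / 2ⁿ)‖₂)` is uniformly monotone: for every `ε > 0`,
if `x, y ∈ E` are coordinatewise nonnegative with `Enorm x = 1` and
`Enorm (x + y) ≤ 1 + ε / 2`, then `Enorm y ≤ ε`. -/
theorem stmt17 (ε : ℝ) (hε : 0 < ε) (x y : lp (fun _ : ℕ => ℝ) 1)
    (hx : ∀ n, 0 ≤ x n) (hy : ∀ n, 0 ≤ y n)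
    (hx1 : Enorm x = 1) (hxy : Enorm (x + y) ≤ 1 + ε / 2) :
    Enorm y ≤ ε := by
  have hxyapp : ∀ n, (x + y) n = x n + y n := fun n => rfl
  have hxy0 : ∀ n, 0 ≤ (x + y) n := fun n => by
    rw [hxyapp]; exact add_nonneg (hx n) (hy n)
  -- ℓ¹ norm is additive on nonnegative elements
  have hadd : ‖x + y‖ = ‖x‖ + ‖y‖ := by
    rw [Enorm_norm1, Enorm_norm1, Enorm_norm1,
      ← Summable.tsum_add (Enorm_summable x) (Enorm_summable y)]
    congr 1; funext n
    rw [hxyapp]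
    simp only [Real.norm_eq_abs, abs_of_nonneg (hx n), abs_of_nonneg (hy n),
      abs_of_nonneg (add_nonneg (hx n) (hy n))]
  -- sqrt term of x + y dominates that of x
  have hsq : Real.sqrt (∑' n, (x n / 2 ^ n) ^ 2)
      ≤ Real.sqrt (∑' n, ((x + y) n / 2 ^ n) ^ 2) := by
    apply Real.sqrt_le_sqrt
    refine Summable.tsum_le_tsum (fun n => ?_) (Enorm_sq_summable x hx) (Enorm_sq_summable _ hxy0)
    have h1 : x n ≤ (x + y) n := by rw [hxyapp]; linarith [hy n]
    have h2 : (0:ℝ) < 2 ^ n := by positivity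
    have h0 : 0 ≤ x n / 2 ^ n := div_nonneg (hx n) h2.le
    have h3 : x n / 2 ^ n ≤ (x + y) n / 2 ^ n := by gcongr
    exact pow_le_pow_left₀ h0 h3 2
  -- hence ‖y‖₁ ≤ ε / 2
  have hy1 : ‖y‖ ≤ ε / 2 := by
    have : Enorm x + ‖y‖ ≤ Enorm (x + y) := by
      unfold Enorm; rw [hadd]; linarith
    rw [hx1] at this; linarith
  -- the sqrt term of y is at most ‖y‖₁
  have hyn : ∀ n, y n ≤ ‖y‖ := fun n => (le_abs_self _).trans
    (by simpa using lp.norm_apply_le_norm (p := 1) one_ne_zero y n)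
  have hsqy : Real.sqrt (∑' n, (y n / 2 ^ n) ^ 2) ≤ ‖y‖ := by
    have hb : (∑' n, (y n / 2 ^ n) ^ 2) ≤ ‖y‖ * ‖y‖ := by
      have hs : Summable (fun n : ℕ => ‖y‖ * ‖y n‖) := (Enorm_summable y).mul_left _
      calc (∑' n, (y n / 2 ^ n) ^ 2) ≤ ∑' n, ‖y‖ * ‖y n‖ := by
            refine Summable.tsum_le_tsum (fun n => ?_) (Enorm_sq_summable y hy) hs
            have h2 : (0:ℝ) < 2 ^ n := by positivity
            have h1 : y n / 2 ^ n ≤ y n := div_le_self (hy n) (one_le_pow₀ one_le_two)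
            have h0 : 0 ≤ y n / 2 ^ n := div_nonneg (hy n) h2.le
            have := hy n
            calc (y n / 2 ^ n) ^ 2 ≤ (y n) ^ 2 := by nlinarith
              _ ≤ ‖y‖ * ‖y n‖ := by
                  rw [Real.norm_eq_abs, abs_of_nonneg this]; nlinarith [hyn n]
        _ = ‖y‖ * ∑' n, ‖y n‖ := tsum_mul_left
        _ = ‖y‖ * ‖y‖ := by rw [← Enorm_norm1]
    calc Real.sqrt (∑' n, (y n / 2 ^ n) ^ 2) ≤ Real.sqrt (‖y‖ * ‖y‖) :=
          Real.sqrt_le_sqrt hb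
      _ = ‖y‖ := Real.sqrt_mul_self (norm_nonneg _)
  unfold Enorm
  linarith
end

section
/- The space ℝ^N endowed with any norm |·| has the approximate hyperplane property with 1-norming set the whole dual unit sphere S_{(ℝ^N)*}; moreover, the maps Υ_ε : S_{(ℝ^N)*} → S_{(ℝ^N)*} witnessing this property can be chosen so that whenever a* ∈ S_{(ℝ^N)*} satisfies a*(e_i) = 0 for some i ≤ N, then also (Υ_ε(a*))(e_i) = 0, where e_i are the canonical basis vectors of ℝ^N. -/
/-!
Norming is the analytic Hahn–Banach theorem: for `x ≠ 0` the functional `t • x ↦ t * f x` on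
`ℝ ∙ x` is dominated by the sublinear `f`, so it extends to some `a ≤ f`, and then `|a| ≤ f` and
`a x = f x`.

For the approximate hyperplane property fix `b` with dual norm `≤ 1`. The points of the unit sphere
at distance `≥ ε` from the face `F(b)` form a compact set on which `b < 1`, hence `b ≤ 1 - η` there.
Since `|a x - b x|` is at most the dual norm of `a - b` on the unit sphere, `δ = η / 2` and
`Υ a = b` work for every `a` in a neighbourhood of `b`. Functionals are topologised as continuous
linear maps; the set `K_T` of functionals of dual norm one vanishing on `e i` for `i ∈ T` is
compact, so finitely many such neighbourhoods give one `δ_T` for all of `K_T`, with `Υ a ∈ K_T`.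
Taking the least `δ_T` over the finitely many `T`, and `T` the zero set of `a`, keeps the zero
coordinates of `a`.
-/

open Filter Topology Set

def face {N : ℕ} (f : (Fin N → ℝ) → ℝ) (b : (Fin N → ℝ) →ₗ[ℝ] ℝ) : Set (Fin N → ℝ) :=
  {y | f y = 1 ∧ b y = 1}

namespace IsNormOn

variable {N : ℕ} {f : (Fin N → ℝ) → ℝ}

def toSeminorm (hf : IsNormOn f) : Seminorm ℝ (Fin N → ℝ) :=
  Seminorm.of f hf.2.2 fun a x => by rw [hf.2.1, Real.norm_eq_abs]

variable (hf : IsNormOn f)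
include hf

lemma apply_zero : f 0 = 0 := map_zero hf.toSeminorm

lemma apply_neg (x : Fin N → ℝ) : f (-x) = f x := map_neg_eq_map hf.toSeminorm x

lemma nonneg_s15 (x : Fin N → ℝ) : 0 ≤ f x := apply_nonneg hf.toSeminorm x

lemma pos {x : Fin N → ℝ} (hx : x ≠ 0) : 0 < f x := (hf.nonneg_s15 x).lt_of_ne' (mt (hf.1 x).1 hx)

lemma apply_inv_smul_self {x : Fin N → ℝ} (hx : x ≠ 0) : f ((f x)⁻¹ • x) = 1 := by
  rw [hf.2.1, abs_inv, abs_of_pos (hf.pos hx), inv_mul_cancel₀ (hf.pos hx).ne']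

lemma continuous : Continuous f :=
  continuousOn_univ.1 (hf.toSeminorm.convexOn.continuousOn isOpen_univ)

lemma exists_le_mul_norm : ∃ C, 0 < C ∧ ∀ x, f x ≤ C * ‖x‖ :=
  hf.toSeminorm.bound_of_continuous_normedSpace hf.continuous

lemma exists_norm_le_mul : ∃ R, 0 < R ∧ ∀ x, ‖x‖ ≤ R * f x := by
  obtain ⟨c, hc, hcf⟩ := (isCompact_sphere (0 : Fin N → ℝ) 1).exists_forall_le'
    hf.continuous.continuousOn fun x hx => hf.pos (ne_zero_of_mem_unit_sphere ⟨x, hx⟩)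
  refine ⟨c⁻¹, inv_pos.2 hc, fun x => ?_⟩
  rcases eq_or_ne x 0 with rfl | hx
  · simp [hf.apply_zero]
  · have hx' := norm_pos_iff.2 hx
    have := hcf (‖x‖⁻¹ • x) (by simp [norm_smul, hx'.ne'])
    rw [hf.2.1, abs_inv, abs_norm, inv_mul_eq_div, le_div_iff₀ hx'] at this
    rwa [le_inv_mul_iff₀ hc]

lemma exists_norm_le_of_apply_le_one : ∃ R, 0 ≤ R ∧ ∀ x, f x ≤ 1 → ‖x‖ ≤ R := by
  obtain ⟨R, hR, hRf⟩ := hf.exists_norm_le_mul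
  exact ⟨R, hR.le, fun x hx => (hRf x).trans (mul_le_of_le_one_right hR.le hx)⟩

lemma isCompact_unitSphere : IsCompact {x | f x = 1} := by
  obtain ⟨R, -, hR⟩ := hf.exists_norm_le_of_apply_le_one
  exact Metric.isCompact_of_isClosed_isBounded (isClosed_eq hf.continuous continuous_const)
    (isBounded_iff_forall_norm_le.2 ⟨R, fun x hx => hR x hx.le⟩)

lemma bddAbove_abs_apply (φ : (Fin N → ℝ) →ₗ[ℝ] ℝ) :
    BddAbove {s | ∃ x, f x ≤ 1 ∧ s = |φ x|} := by
  obtain ⟨R, -, hR⟩ := hf.exists_norm_le_of_apply_le_one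
  let a := LinearMap.toContinuousLinearMap φ
  refine ⟨‖a‖ * R, ?_⟩
  rintro _ ⟨x, hx, rfl⟩
  exact (a.le_opNorm x).trans (by gcongr; exact hR x hx)

lemma abs_apply_le_dualNormF (φ : (Fin N → ℝ) →ₗ[ℝ] ℝ) {x : Fin N → ℝ} (hx : f x ≤ 1) :
    |φ x| ≤ dualNormF f φ :=
  le_csSup (hf.bddAbove_abs_apply φ) ⟨x, hx, rfl⟩

lemma dualNormF_nonneg (φ : (Fin N → ℝ) →ₗ[ℝ] ℝ) : 0 ≤ dualNormF f φ :=
  (abs_nonneg _).trans (hf.abs_apply_le_dualNormF φ (x := 0) (by simp [hf.apply_zero]))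

lemma dualNormF_le {φ : (Fin N → ℝ) →ₗ[ℝ] ℝ} {r : ℝ} (h : ∀ x, f x ≤ 1 → |φ x| ≤ r) :
    dualNormF f φ ≤ r :=
  csSup_le ⟨_, 0, by simp [hf.apply_zero], rfl⟩ fun _ ⟨x, hx, hs⟩ => hs ▸ h x hx

lemma dualNormF_zero : dualNormF f 0 = 0 :=
  le_antisymm (hf.dualNormF_le fun _ _ => by simp) (hf.dualNormF_nonneg 0)

lemma abs_apply_le_dualNormF_mul (φ : (Fin N → ℝ) →ₗ[ℝ] ℝ) (x : Fin N → ℝ) :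
    |φ x| ≤ dualNormF f φ * f x := by
  rcases eq_or_ne x 0 with rfl | hx
  · simp [hf.apply_zero]
  · have := hf.abs_apply_le_dualNormF φ (hf.apply_inv_smul_self hx).le
    rwa [map_smul, smul_eq_mul, abs_mul, abs_inv, abs_of_pos (hf.pos hx),
      inv_mul_le_iff₀ (hf.pos hx), mul_comm] at this

lemma dualNormF_le_add_sub (φ ψ : (Fin N → ℝ) →ₗ[ℝ] ℝ) :
    dualNormF f φ ≤ dualNormF f ψ + dualNormF f (φ - ψ) :=
  hf.dualNormF_le fun x hx => calc
    |φ x| = |ψ x + (φ - ψ) x| := by simp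
    _ ≤ |ψ x| + |(φ - ψ) x| := abs_add_le _ _
    _ ≤ _ := add_le_add (hf.abs_apply_le_dualNormF ψ hx) (hf.abs_apply_le_dualNormF _ hx)

lemma continuous_dualNormF :
    Continuous fun a : (Fin N → ℝ) →L[ℝ] ℝ => dualNormF f a := by
  obtain ⟨R, hR, hRf⟩ := hf.exists_norm_le_of_apply_le_one
  refine (LipschitzWith.of_le_add_mul ⟨R, hR⟩ fun a b => ?_).continuous
  have : dualNormF f ↑(a - b) ≤ R * dist a b :=
    hf.dualNormF_le fun x hx => calc
      |(a - b) x| ≤ ‖a - b‖ * ‖x‖ := (a - b).le_opNorm x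
      _ ≤ ‖a - b‖ * R := by gcongr; exact hRf x hx
      _ = R * dist a b := by rw [dist_eq_norm, mul_comm]
  calc dualNormF f a ≤ dualNormF f b + dualNormF f (↑a - ↑b) := hf.dualNormF_le_add_sub a b
    _ ≤ dualNormF f b + R * dist a b := by simpa using this

lemma exists_norm_le_mul_dualNormF : ∃ C, ∀ a : (Fin N → ℝ) →L[ℝ] ℝ, ‖a‖ ≤ C * dualNormF f a := by
  obtain ⟨C, hC, hCf⟩ := hf.exists_le_mul_norm
  refine ⟨C, fun a => a.opNorm_le_bound (by positivity [hf.dualNormF_nonneg a]) fun x => ?_⟩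
  calc ‖a x‖ ≤ dualNormF f a * f x := hf.abs_apply_le_dualNormF_mul a x
    _ ≤ dualNormF f a * (C * ‖x‖) := by gcongr; exacts [hf.dualNormF_nonneg a, hCf x]
    _ = C * dualNormF f a * ‖x‖ := by ring

lemma exists_dualNormF_eq_one_apply_eq {x : Fin N → ℝ} (hx : x ≠ 0) :
    ∃ a : (Fin N → ℝ) →ₗ[ℝ] ℝ, dualNormF f a = 1 ∧ a x = f x := by
  obtain ⟨a, hax, haf⟩ := exists_extension_of_le_sublinear
    (LinearPMap.mkSpanSingleton x (f x) hx) f (fun c hc y => by rw [hf.2.1, abs_of_pos hc])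
    hf.2.2 fun ⟨z, hz⟩ => by
      obtain ⟨c, rfl⟩ := Submodule.mem_span_singleton.1 hz
      rw [LinearPMap.mkSpanSingleton'_apply, hf.2.1, smul_eq_mul]
      exact mul_le_mul_of_nonneg_right (le_abs_self c) (hf.nonneg_s15 x)
  have hax : a x = f x := (hax _).trans (LinearPMap.mkSpanSingleton_apply ℝ ℝ hx _)
  refine ⟨a, le_antisymm (hf.dualNormF_le fun y hy => ?_) ?_, hax⟩
  · refine abs_le.2 ⟨?_, (haf y).trans hy⟩
    linarith [haf (-y), hf.apply_neg y, map_neg a y]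
  · calc 1 = |a ((f x)⁻¹ • x)| := by
          rw [map_smul, hax, smul_eq_mul, inv_mul_cancel₀ (hf.pos hx).ne', abs_one]
      _ ≤ dualNormF f a := hf.abs_apply_le_dualNormF a (hf.apply_inv_smul_self hx).le

lemma eq_sSup_abs_apply (x : Fin N → ℝ) :
    f x = sSup {s | ∃ a : (Fin N → ℝ) →ₗ[ℝ] ℝ, dualNormF f a = 1 ∧ s = |a x|} := by
  rcases eq_or_ne x 0 with rfl | hx
  · have : {s | ∃ a : (Fin N → ℝ) →ₗ[ℝ] ℝ, dualNormF f a = 1 ∧ s = |a 0|} ⊆ {0} := by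
      rintro _ ⟨a, -, rfl⟩
      simp
    rcases subset_singleton_iff_eq.1 this with h | h
    · rw [h, Real.sSup_empty, hf.apply_zero]
    · rw [h, csSup_singleton, hf.apply_zero]
  · obtain ⟨a, ha, hax⟩ := hf.exists_dualNormF_eq_one_apply_eq hx
    refine (IsGreatest.csSup_eq ⟨?_, ?_⟩).symm
    · exact ⟨a, ha, by rw [hax, abs_of_nonneg (hf.nonneg_s15 x)]⟩
    · rintro _ ⟨b, hb, rfl⟩
      simpa [hb] using hf.abs_apply_le_dualNormF_mul b x

lemma exists_pos_forall_exists_mem_face {b : (Fin N → ℝ) →ₗ[ℝ] ℝ} (hb : dualNormF f b ≤ 1)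
    {ε : ℝ} (hε : 0 < ε) :
    ∃ η > 0, ∀ x, f x = 1 → 1 - η < b x → ∃ y ∈ face f b, f (x - y) < ε := by
  let Z := {x | f x = 1 ∧ ∀ y ∈ face f b, ε ≤ f (x - y)}
  have hZ : IsCompact Z := by
    refine hf.isCompact_unitSphere.of_isClosed_subset ?_ fun x hx => hx.1
    simp only [Z, ofPred_and, ofPred_forall]
    exact (isClosed_eq hf.continuous continuous_const).inter <| isClosed_biInter fun y _ =>
      isClosed_le continuous_const (hf.continuous.comp (continuous_sub_right y))
  have hbZ : ∀ x ∈ Z, 0 < 1 - b x := by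
    rintro x ⟨hx, hxZ⟩
    have hbx : b x ≤ 1 := (le_abs_self _).trans <|
      (hf.abs_apply_le_dualNormF_mul b x).trans (by rwa [hx, mul_one])
    refine sub_pos.2 (hbx.lt_of_ne fun h => ?_)
    have := hxZ x ⟨hx, h⟩
    rw [sub_self, hf.apply_zero] at this
    exact hε.not_ge this
  obtain ⟨η, hη, hηZ⟩ :=
    hZ.exists_forall_le' (f := fun x => 1 - b x)
      (continuous_const.sub b.continuous_of_finiteDimensional).continuousOn hbZ
  refine ⟨η, hη, fun x hx hbx => ?_⟩
  by_contra! h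
  linarith [hηZ x ⟨hx, h⟩]

lemma eventually_forall_exists_mem_face {K : Set ((Fin N → ℝ) →L[ℝ] ℝ)} (hK : IsCompact K)
    (hK₁ : ∀ b ∈ K, dualNormF f b ≤ 1) {ε : ℝ} (hε : 0 < ε) :
    ∀ᶠ δ in 𝓝[>] 0, ∀ a ∈ K, ∃ b ∈ K,
      ∀ x, f x = 1 → 1 - δ < a x → ∃ y ∈ face f b, f (x - y) < ε := by
  refine hK.induction_on (p := fun s => ∀ᶠ δ in 𝓝[>] (0 : ℝ), ∀ a ∈ s, ∃ b ∈ K,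
      ∀ x, f x = 1 → 1 - δ < a x → ∃ y ∈ face f b, f (x - y) < ε) (by simp)
    (fun s t hst h => h.mono fun δ hδ a ha => hδ a (hst ha))
    (fun s t hs ht => (hs.and ht).mono fun δ hδ a ha => ha.elim (hδ.1 a) (hδ.2 a)) ?_
  intro b hb
  obtain ⟨η, hη, hηb⟩ := hf.exists_pos_forall_exists_mem_face (hK₁ b hb) hε
  refine ⟨{a | dualNormF f ↑(a - b) < η / 2}, mem_nhdsWithin_of_mem_nhds ?_, ?_⟩
  · refine IsOpen.mem_nhds (isOpen_lt (hf.continuous_dualNormF.comp (continuous_sub_right b))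
      continuous_const) ?_
    simp [hf.dualNormF_zero, half_pos hη]
  · filter_upwards [Ioo_mem_nhdsGT (half_pos hη)] with δ hδ a ha
    refine ⟨b, hb, fun x hx hax => hηb x hx ?_⟩
    have hab : a x - b x ≤ dualNormF f ↑(a - b) :=
      (le_abs_self _).trans (hf.abs_apply_le_dualNormF ↑(a - b) hx.le)
    have ha : dualNormF f ↑(a - b) < η / 2 := ha
    change 1 - η < b x
    linarith [hδ.2]

lemma isCompact_setOf_dualNormF_eq_one (T : Set (Fin N)) :
    IsCompact {a : (Fin N → ℝ) →L[ℝ] ℝ | dualNormF f a = 1 ∧ ∀ i ∈ T, a (Pi.single i 1) = 0} := by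
  obtain ⟨C, hC⟩ := hf.exists_norm_le_mul_dualNormF
  refine Metric.isCompact_of_isClosed_isBounded ?_
    (isBounded_iff_forall_norm_le.2 ⟨C, fun a ha => by simpa [ha.1] using hC a⟩)
  simp only [ofPred_and, ofPred_forall]
  exact (isClosed_eq hf.continuous_dualNormF continuous_const).inter <| isClosed_biInter
    fun i _ => isClosed_eq (continuous_eval_const _) continuous_const

lemma eventually_exists_faceSelector {ε : ℝ} (hε : 0 < ε) :
    ∀ᶠ δ in 𝓝[>] 0, ∃ Υ : ((Fin N → ℝ) →ₗ[ℝ] ℝ) → ((Fin N → ℝ) →ₗ[ℝ] ℝ),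
      (∀ a, dualNormF f a = 1 → dualNormF f (Υ a) = 1) ∧
      (∀ a, dualNormF f a = 1 → ∀ x, f x = 1 → 1 - δ < a x →
        ∃ y ∈ face f (Υ a), f (x - y) < ε) ∧
      (∀ a i, a (Pi.single i 1) = 0 → Υ a (Pi.single i 1) = 0) := by
  filter_upwards [eventually_all.2 fun T => hf.eventually_forall_exists_mem_face
    (hf.isCompact_setOf_dualNormF_eq_one T) (fun b hb => hb.1.le) hε] with δ hδ
  have : ∀ a : (Fin N → ℝ) →ₗ[ℝ] ℝ, ∃ b : (Fin N → ℝ) →ₗ[ℝ] ℝ,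
      (dualNormF f a = 1 → dualNormF f b = 1 ∧
        ∀ x, f x = 1 → 1 - δ < a x → ∃ y ∈ face f b, f (x - y) < ε) ∧
      ∀ i, a (Pi.single i 1) = 0 → b (Pi.single i 1) = 0 := by
    intro a
    by_cases ha : dualNormF f a = 1
    · obtain ⟨b, ⟨hb₁, hb₀⟩, hb⟩ := hδ {i | a (Pi.single i 1) = 0}
        (LinearMap.toContinuousLinearMap a) ⟨by simpa using ha, fun i hi => by simpa using hi⟩
      exact ⟨b, fun _ => ⟨hb₁, fun x hx hax => hb x hx (by simpa using hax)⟩, hb₀⟩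
    · exact ⟨a, fun h => absurd h ha, fun _ h => h⟩
  choose Υ hΥ hΥ₀ using this
  exact ⟨Υ, fun a ha => (hΥ a ha).1, fun a ha => (hΥ a ha).2, hΥ₀⟩

end IsNormOn

/-- The space `ℝ^N` endowed with any norm `f` has the approximate hyperplane property,
witnessed by the `1`-norming set consisting of the whole dual unit sphere: there is a
function `δ : (0,1) → (0,1)` such that for every `ε ∈ (0,1)` there is a map
`Υ : S_{(ℝ^N)*} → S_{(ℝ^N)*}` with: whenever `a ∈ S_{(ℝ^N)*}`, `x` is in the `f`-unit
sphere and `a x > 1 - δ ε`, then `x` is at `f`-distance `< ε` from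
`F (Υ a) = {y : f y = 1 ∧ (Υ a) y = 1}`; moreover `Υ` can be chosen so that
`(Υ a) (e i) = 0` whenever `a (e i) = 0`. -/
theorem stmt19 {N : ℕ} (f : (Fin N → ℝ) → ℝ) (hnorm : IsNormOn f) :
    (∀ x, f x = sSup {s : ℝ | ∃ a : (Fin N → ℝ) →ₗ[ℝ] ℝ, dualNormF f a = 1 ∧ s = |a x|}) ∧
    ∃ δ : ℝ → ℝ, (∀ ε : ℝ, 0 < ε → ε < 1 → 0 < δ ε ∧ δ ε < 1) ∧
      ∀ ε : ℝ, 0 < ε → ε < 1 →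
        ∃ Υ : ((Fin N → ℝ) →ₗ[ℝ] ℝ) → ((Fin N → ℝ) →ₗ[ℝ] ℝ),
          (∀ a, dualNormF f a = 1 → dualNormF f (Υ a) = 1) ∧
          (∀ a, dualNormF f a = 1 → ∀ x, f x = 1 → 1 - δ ε < a x →
            ∃ y, f y = 1 ∧ (Υ a) y = 1 ∧ f (x - y) < ε) ∧
          (∀ a, ∀ i, a (Pi.single i 1) = 0 → (Υ a) (Pi.single i 1) = 0) := by
  refine ⟨hnorm.eq_sSup_abs_apply, ?_⟩
  choose! δ hsel hδ using fun ε (hε : 0 < ε) =>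
    ((hnorm.eventually_exists_faceSelector hε).and (Ioo_mem_nhdsGT one_pos)).exists
  choose! Υ hΥ₁ hΥ hΥ₀ using hsel
  refine ⟨δ, fun ε hε _ => hδ ε hε,
    fun ε hε _ => ⟨Υ ε, hΥ₁ ε hε, fun a ha x hx hax => ?_, hΥ₀ ε hε⟩⟩
  obtain ⟨y, ⟨hy, hay⟩, hxy⟩ := hΥ ε hε a ha x hx hax
  exact ⟨y, hy, hay, hxy⟩
end
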